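/- Let A, B, C be groups with injective homomorphisms i_A : C → A and i_B : C → B. Then the canonical homomorphisms j_A : A → A *_C B and j_B : B → A *_C B into the amalgamated free product are injective. -/
import Mathlib

/-- if `i_A : C → A` and `i_B : C → B` are injective group homomorphisms, then the
canonical maps `j_A : A → A *_C B` and `j_B : B → A *_C B` into the amalgamated free product
(the pushout of `A ← C → B` in groups, characterized by its universal property) are injective. -/
theorem stmt1 {C A B P : Type*} [Group C] [Group A] [Group B] [Group P]
    (iA : C →* A) (iB : C →* B) (jA : A →* P) (jB : B →* P)
    (hiA : Function.Injective iA) (hiB : Function.Injective iB)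
    (hcomm : jA.comp iA = jB.comp iB)
    (huniv : ∀ (Q : Type (max u_1 u_2 u_3 u_4)) [Group Q] (kA : A →* Q) (kB : B →* Q),
      kA.comp iA = kB.comp iB → ∃! k : P →* Q, k.comp jA = kA ∧ k.comp jB = kB) :
    Function.Injective jA ∧ Function.Injective jB := by
  classical
  let uA : A ≃* ULift.{u_3} A := MulEquiv.ulift.symm
  let uB : B ≃* ULift.{u_2} B := MulEquiv.ulift.symm
  let G : Bool → Type (max u_2 u_3) := fun b => cond b (ULift.{u_3} A) (ULift.{u_2} B)
  letI : ∀ b, Group (G b) := fun b => by cases b <;> dsimp [G] <;> infer_instance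
  let φ : ∀ b, C →* G b := fun b => by
    cases b
    · exact uB.toMonoidHom.comp iB
    · exact uA.toMonoidHom.comp iA
  let K := Monoid.PushoutI φ
  letI : Group K := inferInstanceAs (Group (Monoid.PushoutI φ))
  have hφ : ∀ b, Function.Injective (φ b) := by
    intro b; cases b
    · exact uB.injective.comp hiB
    · exact uA.injective.comp hiA
  have hofA : Function.Injective (Monoid.PushoutI.of (φ := φ) true) :=
    Monoid.PushoutI.of_injective hφ true
  have hofB : Function.Injective (Monoid.PushoutI.of (φ := φ) false) :=
    Monoid.PushoutI.of_injective hφ false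
  let e : K ≃* ULift.{max u_1 u_2 u_3 u_4} K := MulEquiv.ulift.symm
  let kA : A →* ULift.{max u_1 u_2 u_3 u_4} K :=
    e.toMonoidHom.comp ((Monoid.PushoutI.of (φ := φ) true).comp uA.toMonoidHom)
  let kB : B →* ULift.{max u_1 u_2 u_3 u_4} K :=
    e.toMonoidHom.comp ((Monoid.PushoutI.of (φ := φ) false).comp uB.toMonoidHom)
  have hk : kA.comp iA = kB.comp iB := by
    refine MonoidHom.ext fun c => ?_
    show e (Monoid.PushoutI.of (φ := φ) true (uA (iA c))) =
      e (Monoid.PushoutI.of (φ := φ) false (uB (iB c)))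
    congr 1
    have h1 := DFunLike.congr_fun (Monoid.PushoutI.of_comp_eq_base (φ := φ) true) c
    have h2 := DFunLike.congr_fun (Monoid.PushoutI.of_comp_eq_base (φ := φ) false) c
    simp only [MonoidHom.comp_apply] at h1 h2
    exact h1.trans h2.symm
  obtain ⟨k, ⟨hkA, hkB⟩, -⟩ := huniv _ kA kB hk
  constructor
  · have : Function.Injective (k.comp jA) := by
      rw [hkA]
      exact e.injective.comp (hofA.comp uA.injective)
    exact Function.Injective.of_comp this
  · have : Function.Injective (k.comp jB) := by
      rw [hkB]
      exact e.injective.comp (hofB.comp uB.injective)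
    exact Function.Injective.of_comp this
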